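/- In dimension n = 4, if α = (1/2)(−4f² + f(φ−1)) and β = (1/2)(−f² + f(2φ−1+4(φ−1))) for scalars f, φ with the perfect fluid Einstein setup (so that κσ = 3α and 3pκ = 3α − (4α−β)), and if additionally 2φ = 1 − 15f with α ≠ 0, then σ = 3p. -/
import Mathlib

/-- in dimension 4, with the perfect fluid coefficients
`α = (1/2)(-4f² + f(φ-1))`, `β = (1/2)(-f² + f(2φ-1+4(φ-1)))`,
`κσ = 3α`, `3pκ = 3α - (4α - β)`, the relation `2φ = 1 - 15f`
(with `α ≠ 0`) forces the radiation equation of state `σ = 3p`. -/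
theorem stmt4 (f φ κ σ p α β : ℝ) (hκ : κ ≠ 0)
    (hα : α = (1/2) * (-4 * f ^ 2 + f * (φ - 1)))
    (hβ : β = (1/2) * (-f ^ 2 + f * (2 * φ - 1 + 4 * (φ - 1))))
    (hσ : κ * σ = 3 * α)
    (hp : 3 * p * κ = 3 * α - (4 * α - β))
    (hstate : 2 * φ = 1 - 15 * f)
    (hα0 : α ≠ 0) :
    σ = 3 * p := by
  have hβ4 : β = 4 * α := by
    have hφ : φ = (1 - 15 * f) / 2 := by linarith
    subst hφ; rw [hβ, hα]; ring
  have : κ * σ = κ * (3 * p) := by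
    rw [hσ]; nlinarith [hp, hβ4]
  exact mul_left_cancel₀ hκ this
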